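/- arXiv:1312.6537 — 2 statements merged into one kernel-verified Lean document; each statement's English description precedes it below -/
import Mathlib

section
/- For natural numbers m, n ≥ 0 and 0 ≤ r ≤ m, the following identity of rational functions in x, p, q holds: ∑_{k=0}^{m} (-1)^k p^{k(k+1)/2 - rk} / ((p;p)_k (p;p)_{m-k} (x p^k; q)_{n+1}) = x^r · ∑_{k=0}^{n} (-1)^k q^{k(k+1)/2 + rk} / ((q;q)_k (q;q)_{n-k} (x q^k; p)_{m+1}). -/
/-!
For distinct nonzero nodes `a i`, partial fractions give
`1 / ∏ i, (1 - y a i) = ∑ j, c j / (1 - y a j)` with `c j = ∏_{i ≠ j} (1 - a i / a j)⁻¹`;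
for the nodes `q ^ i`, `i ≤ n`, one computes `c j = (-1)^j q^(j(j+1)/2) / ((q;q)_j (q;q)_(n-j))`.
Expanding both sides this way (nodes `a k = p ^ k`, `b j = q ^ j` with coefficients `c k`, `d j`),
their difference is the double sum of `c k d j (a_k^(-r) - (x b_j)^r) / (1 - x a_k b_j)`, and each
summand is a finite geometric sum. After reordering, every term carries a factor
`∑ k, c k a_k^(-e)` with `1 ≤ e ≤ r ≤ m`; in the nodes `a_k⁻¹` this is the degree-`m` coefficient
of the Lagrange interpolant of `X ^ (e - 1)`, hence zero. The argument works for any two families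
of distinct nonzero nodes.
-/

/-- The q-Pochhammer symbol `(a;q)_n = ∏_{j=0}^{n-1} (1 - a q^j)`. -/
noncomputable def qPoch (a q : ℂ) (n : ℕ) : ℂ := ∏ j ∈ Finset.range n, (1 - a * q ^ j)

open Finset

section PartialFractions

open Polynomial Lagrange

variable {F ι : Type*} [Field F] [DecidableEq ι]

theorem inv_pow_sub_pow_div_one_sub_mul_eq_sum {A z : F} (hA : A ≠ 0) (h : 1 - A * z ≠ 0)
    (r : ℕ) :
    (A⁻¹ ^ r - z ^ r) / (1 - A * z) = ∑ i ∈ range r, A⁻¹ ^ (i + 1) * z ^ (r - 1 - i) := by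
  rw [div_eq_iff h, ← geom_sum₂_mul, sum_mul, sum_mul]
  refine sum_congr rfl fun i _ => ?_
  rw [pow_succ]
  linear_combination (A⁻¹ ^ i * z ^ (r - 1 - i) * z) * mul_inv_cancel₀ hA

def partialFractionCoeff (s : Finset ι) (a : ι → F) (j : ι) : F :=
  ∏ i ∈ s.erase j, (1 - a i / a j)⁻¹

variable {s : Finset ι} {a : ι → F}

theorem partialFractionCoeff_eq_nodalWeight (ha : ∀ i ∈ s, a i ≠ 0) {j : ι} (hj : j ∈ s) :
    partialFractionCoeff s a j =
      -a j * (∏ i ∈ s, -a i)⁻¹ * nodalWeight s (fun i => (a i)⁻¹) j := by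
  have hfactor : ∀ i ∈ s.erase j, (1 - a i / a j)⁻¹ = (-a i)⁻¹ * ((a j)⁻¹ - (a i)⁻¹)⁻¹ := by
    intro i hi
    rw [← mul_inv]
    congr 1
    field_simp [ha i (mem_of_mem_erase hi), ha j hj]
    ring
  rw [partialFractionCoeff, prod_congr rfl hfactor, prod_mul_distrib, nodalWeight,
    prod_inv_distrib, ← mul_prod_erase s (fun i => -a i) hj, mul_inv, ← mul_assoc,
    mul_inv_cancel₀ (neg_ne_zero.mpr (ha j hj)), one_mul]

theorem inv_prod_one_sub_mul_eq_sum (ha : Set.InjOn a s) (ha0 : ∀ i ∈ s, a i ≠ 0)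
    (hs : s.Nonempty) {y : F} (hy : ∀ i ∈ s, 1 - y * a i ≠ 0) :
    (∏ i ∈ s, (1 - y * a i))⁻¹ = ∑ j ∈ s, partialFractionCoeff s a j / (1 - y * a j) := by
  have hfactor : ∀ i ∈ s, 1 - y * a i = -a i * (y - (a i)⁻¹) := fun i hi => by
    field_simp [ha0 i hi]; ring
  have hnode : ∀ i ∈ s, y ≠ (a i)⁻¹ := fun i hi h =>
    hy i hi (by rw [hfactor i hi, h, sub_self, mul_zero])
  have hu : Set.InjOn (fun i => (a i)⁻¹) s := inv_injective.comp_injOn ha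
  have hinterp := eval_interpolate_not_at_node (1 : ι → F) hnode
  rw [interpolate_one hu hs, eval_one, eval_nodal] at hinterp
  simp only [Pi.one_apply, mul_one] at hinterp
  rw [prod_congr rfl hfactor, prod_mul_distrib, mul_inv, inv_eq_of_mul_eq_one_right hinterp.symm,
    mul_sum]
  refine sum_congr rfl fun j hj => ?_
  rw [partialFractionCoeff_eq_nodalWeight ha0 hj, hfactor j hj]
  field_simp [ha0 j hj]

theorem sum_partialFractionCoeff_mul_inv_pow_eq_zero (ha : Set.InjOn a s)
    (ha0 : ∀ i ∈ s, a i ≠ 0) {e : ℕ} (he : e + 1 < #s) :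
    ∑ j ∈ s, partialFractionCoeff s a j * (a j)⁻¹ ^ (e + 1) = 0 := by
  have hu : Set.InjOn (fun i => (a i)⁻¹) s := inv_injective.comp_injOn ha
  have hcoeff := coeff_eq_sum hu (P := X ^ e)
    (by rw [degree_X_pow]; exact_mod_cast (by omega : e < #s))
  rw [coeff_X_pow, if_neg (by omega)] at hcoeff
  calc ∑ j ∈ s, partialFractionCoeff s a j * (a j)⁻¹ ^ (e + 1)
      = -(∏ i ∈ s, -a i)⁻¹ *
          ∑ j ∈ s, eval (a j)⁻¹ (X ^ e) / ∏ i ∈ s.erase j, ((a j)⁻¹ - (a i)⁻¹) := by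
        rw [mul_sum]
        refine sum_congr rfl fun j hj => ?_
        rw [partialFractionCoeff_eq_nodalWeight ha0 hj, nodalWeight, prod_inv_distrib, eval_pow,
          eval_X, pow_succ, div_eq_mul_inv]
        linear_combination (-(∏ i ∈ s, -a i)⁻¹ * (∏ i ∈ s.erase j, ((a j)⁻¹ - (a i)⁻¹))⁻¹ *
          (a j)⁻¹ ^ e) * mul_inv_cancel₀ (ha0 j hj)
    _ = 0 := by rw [← hcoeff, mul_zero]

variable {κ : Type*} [DecidableEq κ] {t : Finset κ} {b : κ → F}

theorem sum_partialFractionCoeff_mul_inv_prod_eq (ha : Set.InjOn a s) (hb : Set.InjOn b t)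
    (ha0 : ∀ k ∈ s, a k ≠ 0) (hb0 : ∀ j ∈ t, b j ≠ 0) (ht : t.Nonempty) {r : ℕ} (hr : r < #s)
    {x : F} (hx : ∀ k ∈ s, ∀ j ∈ t, 1 - x * a k * b j ≠ 0) :
    ∑ k ∈ s, partialFractionCoeff s a k * (a k)⁻¹ ^ r * (∏ j ∈ t, (1 - x * a k * b j))⁻¹ =
      x ^ r *
        ∑ j ∈ t, partialFractionCoeff t b j * b j ^ r * (∏ k ∈ s, (1 - x * b j * a k))⁻¹ := by
  have hs : s.Nonempty := card_pos.mp (by omega)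
  have hxba : ∀ j ∈ t, ∀ k ∈ s, 1 - x * b j * a k ≠ 0 := fun j hj k hk => by
    rw [mul_right_comm]; exact hx k hk j hj
  have hxab : ∀ k ∈ s, ∀ j ∈ t, 1 - a k * (x * b j) ≠ 0 := fun k hk j hj => by
    rw [← mul_assoc, mul_comm (a k)]; exact hx k hk j hj
  rw [← sub_eq_zero]
  calc _ = ∑ k ∈ s, ∑ j ∈ t, partialFractionCoeff s a k * (a k)⁻¹ ^ r *
              (partialFractionCoeff t b j / (1 - x * a k * b j)) -
            ∑ j ∈ t, ∑ k ∈ s, x ^ r * (partialFractionCoeff t b j * b j ^ r *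
              (partialFractionCoeff s a k / (1 - x * b j * a k))) := by
          rw [mul_sum]
          congr 1 <;> refine sum_congr rfl fun l hl => ?_
          · rw [inv_prod_one_sub_mul_eq_sum hb hb0 ht (hx l hl), mul_sum]
          · rw [inv_prod_one_sub_mul_eq_sum ha ha0 hs (hxba l hl), mul_sum, mul_sum]
    _ = ∑ k ∈ s, ∑ j ∈ t, partialFractionCoeff s a k * partialFractionCoeff t b j *
            (((a k)⁻¹ ^ r - (x * b j) ^ r) / (1 - a k * (x * b j))) := by
          rw [sum_comm (s := t), ← sum_sub_distrib]
          refine sum_congr rfl fun k _ => ?_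
          rw [← sum_sub_distrib]
          refine sum_congr rfl fun j _ => ?_
          ring
    _ = ∑ i ∈ range r, (∑ k ∈ s, partialFractionCoeff s a k * (a k)⁻¹ ^ (i + 1)) *
          ∑ j ∈ t, partialFractionCoeff t b j * (x * b j) ^ (r - 1 - i) := by
          simp_rw [sum_mul_sum]
          symm
          rw [sum_comm]
          refine sum_congr rfl fun k hk => ?_
          rw [sum_comm]
          refine sum_congr rfl fun j hj => ?_
          rw [inv_pow_sub_pow_div_one_sub_mul_eq_sum (ha0 k hk) (hxab k hk j hj), mul_sum]
          refine sum_congr rfl fun i _ => ?_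
          ring
    _ = 0 := sum_eq_zero fun i hi => by
          rw [sum_partialFractionCoeff_mul_inv_pow_eq_zero ha ha0 (by simp at hi; omega), zero_mul]

end PartialFractions

theorem pow_injective_of_pow_ne_one {M₀ : Type*} [MonoidWithZero M₀] [IsCancelMulZero M₀] {p : M₀}
    (hp : p ≠ 0) (hp1 : ∀ j, 1 ≤ j → p ^ j ≠ 1) : Function.Injective (p ^ · : ℕ → M₀) := by
  intro i j hij
  wlog hlt : i < j generalizing i j
  · rcases (not_lt.mp hlt).lt_or_eq with h | h
    · exact (this hij.symm h).symm
    · exact h.symm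
  refine absurd ?_ (hp1 (j - i) (by omega))
  have : p ^ i * p ^ (j - i) = p ^ i * 1 := by
    rw [← pow_add, Nat.add_sub_cancel' hlt.le, mul_one]; exact hij.symm
  exact mul_left_cancel₀ (pow_ne_zero _ hp) this

theorem qPoch_succ (a q : ℂ) (n : ℕ) : qPoch a q (n + 1) = qPoch a q n * (1 - a * q ^ n) :=
  prod_range_succ _ n

theorem prod_range_one_sub_inv_pow_succ {q : ℂ} (hq : q ≠ 0) (j : ℕ) :
    ∏ i ∈ range j, (1 - (q ^ (i + 1))⁻¹) =
      (-1) ^ j * (q ^ (j * (j + 1) / 2))⁻¹ * qPoch q q j := by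
  induction j with
  | zero => simp [qPoch]
  | succ j ih =>
    have htri : (j + 1) * (j + 1 + 1) / 2 = j * (j + 1) / 2 + (j + 1) := by
      have : (j + 1) * (j + 1 + 1) = j * (j + 1) + 2 * (j + 1) := by ring
      omega
    rw [prod_range_succ, ih, htri, qPoch_succ, pow_add]
    field_simp
    ring

theorem prod_erase_one_sub_pow_div_pow {q : ℂ} (hq : q ≠ 0) {n j : ℕ} (hj : j ≤ n) :
    ∏ i ∈ (range (n + 1)).erase j, (1 - q ^ i / q ^ j) =
      (-1) ^ j * (q ^ (j * (j + 1) / 2))⁻¹ * qPoch q q j * qPoch q q (n - j) := by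
  have hsplit : (range (n + 1)).erase j = range j ∪ Ico (j + 1) (n + 1) := by
    ext i; simp only [mem_erase, mem_range, mem_union, mem_Ico]; omega
  have hdisj : Disjoint (range j) (Ico (j + 1) (n + 1)) := by
    rw [disjoint_left]; intro i hi hi'; simp only [mem_range, mem_Ico] at hi hi'; omega
  have hlow : ∏ i ∈ range j, (1 - q ^ i / q ^ j) = ∏ i ∈ range j, (1 - (q ^ (i + 1))⁻¹) := by
    rw [← prod_range_reflect]
    refine prod_congr rfl fun i hi => ?_
    rw [mem_range] at hi
    have hpow : q ^ j = q ^ (j - 1 - i) * q ^ (i + 1) := by rw [← pow_add]; congr 1; omega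
    rw [hpow, div_mul_cancel_left₀ (pow_ne_zero _ hq)]
  have hhigh : ∏ i ∈ Ico (j + 1) (n + 1), (1 - q ^ i / q ^ j) = qPoch q q (n - j) := by
    rw [prod_Ico_eq_prod_range, qPoch, show n + 1 - (j + 1) = n - j by omega]
    refine prod_congr rfl fun i _ => ?_
    rw [add_assoc, add_comm 1, pow_add, pow_succ]
    field_simp
  rw [hsplit, prod_union hdisj, hlow, hhigh, prod_range_one_sub_inv_pow_succ hq]

theorem partialFractionCoeff_range_pow {q : ℂ} (hq : q ≠ 0) {n j : ℕ} (hj : j ≤ n) :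
    partialFractionCoeff (range (n + 1)) (q ^ ·) j =
      (-1) ^ j * q ^ (j * (j + 1) / 2) / (qPoch q q j * qPoch q q (n - j)) := by
  simp only [partialFractionCoeff]
  rw [prod_inv_distrib, prod_erase_one_sub_pow_div_pow hq hj, mul_inv, mul_inv, mul_inv, inv_inv,
    ← inv_pow, inv_neg, inv_one, div_eq_mul_inv, mul_inv]
  ring

theorem stmt1_general (m n r : ℕ) (hr : r ≤ m) (x p q : ℂ) (hp : p ≠ 0) (hq : q ≠ 0)
    (hp1 : ∀ j, 1 ≤ j → p ^ j ≠ 1) (hq1 : ∀ j, 1 ≤ j → q ^ j ≠ 1)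
    (hx1 : ∀ k ≤ m, qPoch (x * p ^ k) q (n + 1) ≠ 0) :
    ∑ k ∈ Finset.range (m + 1),
        (-1 : ℂ) ^ k * p ^ (((k * (k + 1) / 2 : ℕ) : ℤ) - (r : ℤ) * k) /
          (qPoch p p k * qPoch p p (m - k) * qPoch (x * p ^ k) q (n + 1))
      = x ^ r * ∑ k ∈ Finset.range (n + 1),
          (-1 : ℂ) ^ k * q ^ (((k * (k + 1) / 2 : ℕ) : ℤ) + (r : ℤ) * k) /
            (qPoch q q k * qPoch q q (n - k) * qPoch (x * q ^ k) p (m + 1)) := by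
  have hx : ∀ k ∈ range (m + 1), ∀ j ∈ range (n + 1), 1 - x * p ^ k * q ^ j ≠ 0 :=
    fun k hk j hj => prod_ne_zero_iff.mp (hx1 k (mem_range_succ_iff.mp hk)) j hj
  have hr' : r < #(range (m + 1)) := by rwa [card_range, Nat.lt_succ_iff]
  have key := sum_partialFractionCoeff_mul_inv_prod_eq (pow_injective_of_pow_ne_one hp hp1).injOn
    (pow_injective_of_pow_ne_one hq hq1).injOn (fun _ _ => pow_ne_zero _ hp)
    (fun _ _ => pow_ne_zero _ hq) nonempty_range_add_one hr' hx
  calc _ = ∑ k ∈ range (m + 1), partialFractionCoeff (range (m + 1)) (p ^ ·) k * (p ^ k)⁻¹ ^ r *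
            (∏ j ∈ range (n + 1), (1 - x * p ^ k * q ^ j))⁻¹ := by
        refine sum_congr rfl fun k hk => ?_
        rw [partialFractionCoeff_range_pow hp (mem_range_succ_iff.mp hk), zpow_sub₀ hp,
          mul_comm (r : ℤ), zpow_mul, zpow_natCast, zpow_natCast, zpow_natCast, inv_pow]
        unfold qPoch
        ring
    _ = _ := key
    _ = _ := by
        congr 1
        refine sum_congr rfl fun k hk => ?_
        rw [partialFractionCoeff_range_pow hq (mem_range_succ_iff.mp hk), zpow_add₀ hq,
          mul_comm (r : ℤ), zpow_mul, zpow_natCast, zpow_natCast, zpow_natCast]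
        unfold qPoch
        ring

/-- Theorem 1.1: the bibasic identity with parameter `r`. -/
theorem stmt1 (m n r : ℕ) (hr : r ≤ m) (x p q : ℂ) (hp : p ≠ 0) (hq : q ≠ 0)
    (hp1 : ∀ j, 1 ≤ j → p ^ j ≠ 1) (hq1 : ∀ j, 1 ≤ j → q ^ j ≠ 1)
    (hx1 : ∀ k ≤ m, qPoch (x * p ^ k) q (n + 1) ≠ 0)
    (hx2 : ∀ k ≤ n, qPoch (x * q ^ k) p (m + 1) ≠ 0) :
    ∑ k ∈ Finset.range (m + 1),
        (-1 : ℂ) ^ k * p ^ (((k * (k + 1) / 2 : ℕ) : ℤ) - (r : ℤ) * k) /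
          (qPoch p p k * qPoch p p (m - k) * qPoch (x * p ^ k) q (n + 1))
      = x ^ r * ∑ k ∈ Finset.range (n + 1),
          (-1 : ℂ) ^ k * q ^ (((k * (k + 1) / 2 : ℕ) : ℤ) + (r : ℤ) * k) /
            (qPoch q q k * qPoch q q (n - k) * qPoch (x * q ^ k) p (m + 1)) :=
  stmt1_general m n r hr x p q hp hq hp1 hq1 hx1
end

section
/- Partial fraction decomposition: for n ≥ 0, 1/∏_{i=1}^{n+1}(z − x q^i) = ∑_{k=0}^{n} (−1)^k q^{\binom{n−k}{2} − \binom{n+1}{2}} x^{−n} / ((q;q)_k (q;q)_{n−k} (z − x q^{k+1})), as an identity of rational functions in z, x, q. -/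
open Finset

/-!
Lagrange interpolation of the constant `1` at distinct nodes `v i` gives the partial fraction
expansion `1 / ∏ (z - v i) = ∑ₖ 1 / ((z - v k) * ∏_{i ≠ k} (v k - v i))`. For the geometric nodes
`x q^(i+1)` the product at node `k` splits into the `k` nodes below it, contributing
`(-1)^k (xq)^k q^(k choose 2) (q;q)_k`, and the `n - k` nodes above it, contributing
`(xq)^(n-k) q^(k(n-k)) (q;q)_(n-k)`; the total power of `q` is `(n+1 choose 2) - (n-k choose 2)`.
-/

theorem one_div_prod_sub_eq_sum {ι F : Type*} [Field F] [DecidableEq ι] {s : Finset ι}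
    (hs : s.Nonempty) {v : ι → F} (hv : Set.InjOn v s) {z : F} (hz : ∀ i ∈ s, z - v i ≠ 0) :
    1 / ∏ i ∈ s, (z - v i) = ∑ j ∈ s, 1 / ((z - v j) * ∏ i ∈ s.erase j, (v j - v i)) := by
  have hsum := congrArg (Polynomial.eval z) (Lagrange.sum_basis hv hs)
  simp only [Polynomial.eval_finsetSum, Polynomial.eval_one, Lagrange.basis,
    Lagrange.basisDivisor, Polynomial.eval_prod, Polynomial.eval_mul, Polynomial.eval_C,
    Polynomial.eval_sub, Polynomial.eval_X] at hsum
  calc 1 / ∏ i ∈ s, (z - v i)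
      = ∑ j ∈ s, (∏ i ∈ s.erase j, (v j - v i)⁻¹ * (z - v i)) / ∏ i ∈ s, (z - v i) := by
        rw [← sum_div, hsum]
    _ = _ := by
      refine sum_congr rfl fun j hj => ?_
      have hvj : ∏ i ∈ s.erase j, (v j - v i) ≠ 0 := prod_ne_zero_iff.2 fun i hi =>
        sub_ne_zero.2 fun h => (ne_of_mem_erase hi) (hv (mem_of_mem_erase hi) hj h.symm)
      have hzj : ∏ i ∈ s.erase j, (z - v i) ≠ 0 :=
        prod_ne_zero_iff.2 fun i hi => hz i (mem_of_mem_erase hi)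
      rw [← mul_prod_erase s _ hj, prod_mul_distrib, prod_inv_distrib]
      field_simp [hz j hj]

theorem prod_Icc_one_eq_prod_range {M : Type*} [CommMonoid M] (f : ℕ → M) (n : ℕ) :
    ∏ i ∈ Icc 1 n, f i = ∏ i ∈ range n, f (i + 1) := by
  rw [range_eq_Ico, prod_Ico_add', ← Ico_add_one_right_eq_Icc]

theorem pow_injective_of_pow_ne_one_s13 {G₀ : Type*} [GroupWithZero G₀] {q : G₀} (hq : q ≠ 0)
    (hq1 : ∀ j, 1 ≤ j → q ^ j ≠ 1) : Function.Injective (q ^ · : ℕ → G₀) := by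
  have hinf : ¬IsOfFinOrder (Units.mk0 q hq) := by
    rw [isOfFinOrder_iff_pow_eq_one]
    rintro ⟨j, hj, h⟩
    exact hq1 j hj (by simpa using congrArg Units.val h)
  exact fun i j hij => injective_pow_iff_not_isOfFinOrder.2 hinf (Units.ext (by simpa using hij))

theorem qPoch_self (q : ℂ) (k : ℕ) : qPoch q q k = ∏ j ∈ range k, (1 - q ^ (j + 1)) := by
  simp only [qPoch, pow_succ']

theorem qPoch_self_ne_zero {q : ℂ} (hq1 : ∀ j, 1 ≤ j → q ^ j ≠ 1) (k : ℕ) : qPoch q q k ≠ 0 := by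
  rw [qPoch_self]
  exact prod_ne_zero_iff.2 fun j _ => sub_ne_zero.2 (hq1 (j + 1) (Nat.le_add_left 1 j)).symm

theorem prod_range_mul_pow_sub_mul_pow (a q : ℂ) (k : ℕ) :
    ∏ i ∈ range k, (a * q ^ k - a * q ^ i) = (-1) ^ k * a ^ k * q ^ k.choose 2 * qPoch q q k := by
  have hterm : ∀ i ∈ range k,
      a * q ^ k - a * q ^ i = -1 * a * q ^ i * (1 - q ^ (k - 1 - i + 1)) := by
    intro i hi
    have hqk : q ^ k = q ^ i * q ^ (k - 1 - i + 1) := by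
      rw [← pow_add]; congr 1; grind
    rw [hqk]
    ring
  rw [prod_congr rfl hterm, prod_mul_distrib, prod_mul_distrib, prod_mul_distrib, prod_const,
    prod_const, card_range, prod_pow_eq_pow_sum, sum_range_id, ← Nat.choose_two_right,
    prod_range_reflect (fun j => 1 - q ^ (j + 1)), qPoch_self]

theorem prod_range_mul_pow_sub_mul_pow_add (a q : ℂ) (k m : ℕ) :
    ∏ j ∈ range m, (a * q ^ k - a * q ^ (k + 1 + j)) = a ^ m * q ^ (k * m) * qPoch q q m := by
  have hterm : ∀ j ∈ range m, a * q ^ k - a * q ^ (k + 1 + j) = a * q ^ k * (1 - q ^ (j + 1)) :=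
    fun j _ => by ring
  rw [prod_congr rfl hterm, prod_mul_distrib, prod_mul_distrib, prod_const, prod_const,
    card_range, pow_mul, qPoch_self]

theorem prod_erase_mul_pow_sub_mul_pow (a q : ℂ) {k n : ℕ} (hk : k ≤ n) :
    ∏ i ∈ (range (n + 1)).erase k, (a * q ^ k - a * q ^ i)
      = (-1) ^ k * a ^ n * q ^ (k.choose 2 + k * (n - k)) * qPoch q q k * qPoch q q (n - k) := by
  have hsplit : (range (n + 1)).erase k = range k ∪ Ico (k + 1) (n + 1) := by
    ext i; simp only [mem_erase, mem_range, mem_union, mem_Ico]; omega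
  have hdisj : Disjoint (range k) (Ico (k + 1) (n + 1)) :=
    disjoint_left.2 fun i hi hi' => by simp only [mem_range, mem_Ico] at hi hi'; omega
  rw [hsplit, prod_union hdisj, prod_Ico_eq_prod_range, show n + 1 - (k + 1) = n - k by omega,
    prod_range_mul_pow_sub_mul_pow, prod_range_mul_pow_sub_mul_pow_add, pow_add q,
    ← Nat.add_sub_cancel' hk, pow_add a, Nat.add_sub_cancel_left]
  ring

theorem choose_two_sub_choose_two {k n : ℕ} (hk : k ≤ n) :
    (((n - k) * (n - k - 1) / 2 : ℕ) : ℤ) - (((n + 1) * n / 2 : ℕ) : ℤ)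
      = -((n + k.choose 2 + k * (n - k) : ℕ) : ℤ) := by
  obtain ⟨m, rfl⟩ := Nat.exists_eq_add_of_le hk
  have h := Nat.choose_two_right (k + m + 1)
  rw [Nat.add_sub_cancel] at h
  rw [Nat.add_sub_cancel_left, ← Nat.choose_two_right, ← h]
  qify
  simp only [Nat.cast_choose_two]
  push_cast
  ring

/-- Partial fraction decomposition of `1/∏_{i=1}^{n+1}(z - x q^i)`. -/
theorem stmt13 (n : ℕ) (z x q : ℂ) (hx : x ≠ 0) (hq : q ≠ 0)
    (hq1 : ∀ j, 1 ≤ j → q ^ j ≠ 1)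
    (hz : ∀ i ∈ Finset.Icc 1 (n + 1), z - x * q ^ i ≠ 0) :
    1 / ∏ i ∈ Finset.Icc 1 (n + 1), (z - x * q ^ i)
      = ∑ k ∈ Finset.range (n + 1),
          (-1 : ℂ) ^ k *
            q ^ ((((n - k) * (n - k - 1) / 2 : ℕ) : ℤ) - (((n + 1) * n / 2 : ℕ) : ℤ)) *
            x ^ (-(n : ℤ)) /
            (qPoch q q k * qPoch q q (n - k) * (z - x * q ^ (k + 1))) := by
  have hnode : ∀ i : ℕ, x * q ^ (i + 1) = x * q * q ^ i := fun i => by ring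
  have hv : Set.InjOn (fun i : ℕ => x * q * q ^ i) (range (n + 1)) := fun i _ j _ hij =>
    pow_injective_of_pow_ne_one_s13 hq hq1 (mul_left_cancel₀ (mul_ne_zero hx hq) hij)
  have hz' : ∀ i ∈ range (n + 1), z - x * q * q ^ i ≠ 0 := fun i hi => by
    rw [← hnode]
    exact hz (i + 1) (by rw [mem_range] at hi; rw [mem_Icc]; omega)
  simp only [prod_Icc_one_eq_prod_range, hnode]
  rw [one_div_prod_sub_eq_sum nonempty_range_add_one hv hz']
  refine sum_congr rfl fun k hk => ?_
  have hkn : k ≤ n := Nat.lt_succ_iff.1 (mem_range.1 hk)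
  rw [prod_erase_mul_pow_sub_mul_pow _ _ hkn, choose_two_sub_choose_two hkn, zpow_neg,
    zpow_neg, zpow_natCast, zpow_natCast]
  field_simp [hz' k hk, qPoch_self_ne_zero hq1 k, qPoch_self_ne_zero hq1 (n - k)]
  rw [pow_right_comm, neg_one_sq, one_pow]
  ring
end
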